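/- The composite of two 1-truss bordisms, composed as profunctors, is again a 1-truss bordism; in particular the composite of two Boolean profunctors satisfying conditions (A) and (B) is Boolean. -/
import Mathlib


/-- The combinatorial data underlying a 1-truss needed to speak of 1-truss bordisms:
a dimension map to `{0,1}` and a (strict) total frame order `≺`. -/
structure FramedSet (α : Type*) where
  /-- the dimension of each element -/
  dim : α → Fin 2
  /-- the strict frame order `≺` -/
  flt : α → α → Prop
  flt_irrefl : ∀ a, ¬ flt a a
  flt_trans : ∀ a b c, flt a b → flt b c → flt a c
  flt_trichotomy : ∀ a b, flt a b ∨ a = b ∨ flt b a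

/-- Condition (A) for a 1-truss bordism `R : T ⇸ S`: `R` restricts to a function
on dimension-0 parts (each `t` of dimension 0 is related to exactly one `s`, which has
dimension 0) and to a cofunction on dimension-1 parts (each `s` of dimension 1 is
related to exactly one `t`, which has dimension 1). -/
def CondA {α β : Type*} (T : FramedSet α) (S : FramedSet β) (R : α → β → Prop) : Prop :=
  (∀ t, T.dim t = 0 → ∃! s, R t s) ∧
  (∀ t s, T.dim t = 0 → R t s → S.dim s = 0) ∧
  (∀ s, S.dim s = 1 → ∃! t, R t s) ∧
  (∀ t s, S.dim s = 1 → R t s → T.dim t = 1)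

/-- Condition (B) for a 1-truss bordism: whenever `R (t,s)` and `R (t',s')` both hold
for distinct pairs, then either `t ≺ t'` or `s' ≺ s`, but not both. -/
def CondB {α β : Type*} (T : FramedSet α) (S : FramedSet β) (R : α → β → Prop) : Prop :=
  ∀ t s t' s', R t s → R t' s' → (t, s) ≠ (t', s') → Xor' (T.flt t t') (S.flt s' s)

/-- A 1-truss bordism is a (Boolean) relation satisfying (A) and (B). -/
def IsBordism {α β : Type*} (T : FramedSet α) (S : FramedSet β) (R : α → β → Prop) : Prop :=
  CondA T S R ∧ CondB T S R

/-- Composition of relations (Boolean profunctors). -/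
def RelComp {α β γ : Type*} (R : α → β → Prop) (Q : β → γ → Prop) : α → γ → Prop :=
  fun t u => ∃ s, R t s ∧ Q s u


private lemma FramedSet.noboth {δ : Type*} (D : FramedSet δ) (a b : δ)
    (h1 : D.flt a b) (h2 : D.flt b a) : False :=
  D.flt_irrefl a (D.flt_trans a b a h1 h2)

private lemma condB_left_unique {δ ε : Type*} (D : FramedSet δ) (E : FramedSet ε)
    (P : δ → ε → Prop) (hB : CondB D E P) : ∀ t t' s, P t s → P t' s → t = t' := by
  intro t t' s h1 h2
  by_contra hne
  have x1 := hB t s t' s h1 h2 (by simp [hne])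
  have x2 := hB t' s t s h2 h1 (by simp [Ne.symm hne])
  have hT : D.flt t t' := (x1.resolve_right (fun h => E.flt_irrefl s h.1)).1
  have hT' : D.flt t' t := (x2.resolve_right (fun h => E.flt_irrefl s h.1)).1
  exact D.noboth t t' hT hT'

private lemma condB_right_unique {δ ε : Type*} (D : FramedSet δ) (E : FramedSet ε)
    (P : δ → ε → Prop) (hB : CondB D E P) : ∀ t s s', P t s → P t s' → s = s' := by
  intro t s s' h1 h2
  by_contra hne
  have x1 := hB t s t s' h1 h2 (by simp [hne])
  have x2 := hB t s' t s h2 h1 (by simp [Ne.symm hne])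
  have hS : E.flt s' s := (x1.resolve_left (fun h => D.flt_irrefl t h.1)).1
  have hS' : E.flt s s' := (x2.resolve_left (fun h => D.flt_irrefl t h.1)).1
  exact E.noboth s s' hS' hS

/-- The composite of two 1-truss bordisms (composed as profunctors) is again a
1-truss bordism: conditions (A) and (B) are preserved under relational composition.
(The composite is automatically Boolean, being encoded as a relation.) -/
theorem bordism_comp {α β γ : Type*} (T : FramedSet α) (S : FramedSet β) (U : FramedSet γ)
    (R : α → β → Prop) (Q : β → γ → Prop)
    (hR : IsBordism T S R) (hQ : IsBordism S U Q) :
    IsBordism T U (RelComp R Q) := by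
  obtain ⟨⟨hR1, hR2, hR3, hR4⟩, hRB⟩ := hR
  obtain ⟨⟨hQ1, hQ2, hQ3, hQ4⟩, hQB⟩ := hQ
  constructor
  · refine ⟨?_, ?_, ?_, ?_⟩
    · intro t ht
      obtain ⟨s₀, hs₀, hs₀u⟩ := hR1 t ht
      have hds : S.dim s₀ = 0 := hR2 t s₀ ht hs₀
      obtain ⟨u₀, hu₀, hu₀u⟩ := hQ1 s₀ hds
      refine ⟨u₀, ⟨s₀, hs₀, hu₀⟩, ?_⟩
      rintro u ⟨s, hs, hu⟩
      have : s = s₀ := hs₀u s hs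
      subst this
      exact hu₀u u hu
    · rintro t u ht ⟨s, hs, hu⟩
      exact hQ2 s u (hR2 t s ht hs) hu
    · intro u hu
      obtain ⟨s₀, hs₀, hs₀u⟩ := hQ3 u hu
      have hds : S.dim s₀ = 1 := hQ4 s₀ u hu hs₀
      obtain ⟨t₀, ht₀, ht₀u⟩ := hR3 s₀ hds
      refine ⟨t₀, ⟨s₀, ht₀, hs₀⟩, ?_⟩
      rintro t ⟨s, hs, hqs⟩
      have : s = s₀ := hs₀u s hqs
      subst this
      exact ht₀u t hs
    · rintro t u hu ⟨s, hs, hqs⟩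
      exact hR4 t s (hQ4 s u hu hqs) hs
  · rintro t u t' u' ⟨s, hRs, hQs⟩ ⟨s', hRs', hQs'⟩ hne
    by_cases hs : s = s'
    · subst hs
      have ht : t = t' := condB_left_unique T S R hRB t t' s hRs hRs'
      have hu : u = u' := condB_right_unique S U Q hQB s u u' hQs hQs'
      exact absurd (by rw [ht, hu]) hne
    · have hp1 : (t, s) ≠ (t', s') := fun h => hs (congrArg Prod.snd h)
      have hp2 : (s, u) ≠ (s', u') := fun h => hs (congrArg Prod.fst h)
      have x1 := hRB t s t' s' hRs hRs' hp1
      have x2 := hQB s u s' u' hQs hQs' hp2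
      rcases S.flt_trichotomy s s' with h | h | h
      · have h1 : T.flt t t' := (x1.resolve_right (fun hh => S.noboth s s' h hh.1)).1
        have h2 : ¬ U.flt u' u := (x2.resolve_right (fun hh => hh.2 h)).2
        exact Or.inl ⟨h1, h2⟩
      · exact absurd h hs
      · have h2 : U.flt u' u := (x2.resolve_left (fun hh => S.noboth s s' hh.1 h)).1
        have h1 : ¬ T.flt t t' := (x1.resolve_left (fun hh => hh.2 h)).2
        exact Or.inr ⟨h2, h1⟩
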